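/- (Bekić, 2×2 case) Let C be a Chomsky algebra, σ : T X → C an interpretation, x ≠ y variables, and p, q ∈ T X. Define the terms b₀ = μy.(q[x := μx.p]) and a₀ = (μx.p)[y := b₀]. Then (σ(a₀), σ(b₀)) is the least pair (a, b) ∈ C × C (in the componentwise order) satisfying σ[x↦a][y↦b](p) ≤ a and σ[x↦a][y↦b](q) ≤ b. -/

import Mathlib

/-- μ-expressions over a set `X` of variables:
`t ::= x | t + t | t·t | 0 | 1 | μx.t`. -/
inductive MuTerm (X : Type) : Type
  | var : X → MuTerm X
  | zero : MuTerm X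
  | one : MuTerm X
  | add : MuTerm X → MuTerm X → MuTerm X
  | mul : MuTerm X → MuTerm X → MuTerm X
  | mu : X → MuTerm X → MuTerm X

namespace MuTerm

variable {X : Type}

/-- Size of a term (used for termination of substitution). -/
def size : MuTerm X → ℕ
  | var _ => 1
  | zero => 1
  | one => 1
  | add s t => size s + size t + 1
  | mul s t => size s + size t + 1
  | mu _ t => size t + 1

variable [DecidableEq X]

/-- Free variables of a μ-expression. -/
def fv : MuTerm X → Finset X
  | var x => {x}
  | zero => ∅
  | one => ∅
  | add s t => fv s ∪ fv t
  | mul s t => fv s ∪ fv t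
  | mu x t => fv t \ {x}

/-- All (free and bound) variables of a μ-expression. -/
def vars : MuTerm X → Finset X
  | var x => {x}
  | zero => ∅
  | one => ∅
  | add s t => vars s ∪ vars t
  | mul s t => vars s ∪ vars t
  | mu x t => insert x (vars t)

/-- Rename free occurrences of the variable `y` to `z`. -/
def rename (y z : X) : MuTerm X → MuTerm X
  | var x => if x = y then var z else var x
  | zero => zero
  | one => one
  | add s t => add (rename y z s) (rename y z t)
  | mul s t => mul (rename y z s) (rename y z t)
  | mu x t => if x = y then mu x t else mu x (rename y z t)

theorem size_rename (y z : X) : ∀ t : MuTerm X, (rename y z t).size = t.size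
  | var x => by simp only [rename]; split <;> rfl
  | zero => rfl
  | one => rfl
  | add s t => by simp [rename, size, size_rename y z s, size_rename y z t]
  | mul s t => by simp [rename, size, size_rename y z s, size_rename y z t]
  | mu x t => by
      simp only [rename]; split
      · rfl
      · simp [size, size_rename y z t]

variable [Infinite X]

/-- Capture-avoiding substitution `t[x := u]`: substitute `u` for the free
occurrences of `x` in the last argument, renaming bound variables to fresh
ones to avoid capture. -/
noncomputable def subst (x : X) (u : MuTerm X) : MuTerm X → MuTerm X
  | var y => if y = x then u else var y
  | zero => zero
  | one => one
  | add s t => add (subst x u s) (subst x u t)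
  | mul s t => mul (subst x u s) (subst x u t)
  | mu y t =>
    if y = x then mu y t
    else
      let z : X := Classical.choose (Infinite.exists_notMem_finset (vars t ∪ fv u ∪ {x}))
      mu z (subst x u (rename y z t))
  termination_by t => size t
  decreasing_by
    all_goals simp only [size, size_rename]
    all_goals omega

/-- The `n`-th approximant `nx.t`: `0x.t = 0`, `(n+1)x.t = t[x := nx.t]`. -/
noncomputable def napprox : ℕ → X → MuTerm X → MuTerm X
  | 0, _, _ => zero
  | n + 1, x, t => subst x (napprox n x t) t

end MuTerm

/-- Polynomial functions over a semiring `C` in `n` indeterminates: functions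
built from constants in `C`, projections, addition, and multiplication. -/
inductive IsPolyFun {C : Type} [Semiring C] : {n : ℕ} → ((Fin n → C) → C) → Prop
  | const {n : ℕ} (c : C) : IsPolyFun fun _ : Fin n → C => c
  | proj {n : ℕ} (i : Fin n) : IsPolyFun fun v => v i
  | add {n : ℕ} {p q : (Fin n → C) → C} :
      IsPolyFun p → IsPolyFun q → IsPolyFun fun v => p v + q v
  | mul {n : ℕ} {p q : (Fin n → C) → C} :
      IsPolyFun p → IsPolyFun q → IsPolyFun fun v => p v * q v

/-- A Chomsky algebra is an idempotent semiring (ordered by `a ≤ b ↔ a + b = b`)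
in which every finite system of polynomial inequalities `pᵢ ≤ xᵢ` has a least
solution. -/
class ChomskyAlgebra (C : Type) extends IdemSemiring C where
  algClosed : ∀ {n : ℕ} (p : Fin n → (Fin n → C) → C), (∀ i, IsPolyFun (p i)) →
    ∃ sol : Fin n → C, (∀ i, p i sol ≤ sol i) ∧
      ∀ τ : Fin n → C, (∀ i, p i τ ≤ τ i) → ∀ i, sol i ≤ τ i

/-- `IsInterp eval` says that `eval` is the family of interpretations of
μ-expressions over the Chomsky algebra `C`, one for each valuation `v : X → C`:
each `eval v` is a homomorphism with respect to the semiring operations, and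
`eval v (μx.t)` is the least `a` with `eval v[x↦a] t ≤ a`. -/
structure IsInterp {X C : Type} [DecidableEq X] [Infinite X] [ChomskyAlgebra C]
    (eval : (X → C) → MuTerm X → C) : Prop where
  var : ∀ (v : X → C) (x : X), eval v (.var x) = v x
  zero : ∀ v, eval v .zero = 0
  one : ∀ v, eval v .one = 1
  add : ∀ v s t, eval v (.add s t) = eval v s + eval v t
  mul : ∀ v s t, eval v (.mul s t) = eval v s * eval v t
  mu : ∀ (v : X → C) (x : X) (t : MuTerm X),
    IsLeast {a : C | eval (Function.update v x a) t ≤ a} (eval v (.mu x t))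

/-- A Chomsky algebra `C` is μ-continuous if for every interpretation `σ` over
`C`, all `c, d ∈ C`, and every term `t`,
`c·σ(μx.t)·d = sup_{n ≥ 0} c·σ(nx.t)·d` (in particular the supremum exists). -/
def MuContinuous (C : Type) [ChomskyAlgebra C] : Prop :=
  ∀ (X : Type) [DecidableEq X] [Infinite X] (eval : (X → C) → MuTerm X → C),
    IsInterp eval → ∀ (v : X → C) (c d : C) (x : X) (t : MuTerm X),
      IsLUB (Set.range fun n : ℕ => c * eval v (MuTerm.napprox n x t) * d)
        (c * eval v (.mu x t) * d)

/-- A language interpretation `τ : T X → P(Y*)`: a homomorphism for the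
semiring operations on languages with `τ(μx.t) = ⋃ n, τ(nx.t)`. -/
structure IsLangInterp {X Y : Type} [DecidableEq X] [Infinite X]
    (τ : MuTerm X → Language Y) : Prop where
  zero : τ .zero = 0
  one : τ .one = 1
  add : ∀ s t, τ (.add s t) = τ s + τ t
  mul : ∀ s t, τ (.mul s t) = τ s * τ t
  mu : ∀ (x : X) (t : MuTerm X), τ (.mu x t) = ⨆ n : ℕ, τ (MuTerm.napprox n x t)

/-- The canonical interpretation `L_X : T X → P(X*)`: the language
interpretation with `L_X(x) = {x}`. -/
def IsCanonicalInterp {X : Type} [DecidableEq X] [Infinite X]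
    (L : MuTerm X → Language X) : Prop :=
  IsLangInterp L ∧ ∀ x : X, L (.var x) = {[x]}

/-- For a word `w = x₁⋯x_k ∈ X*` and `σ : X → K`, `wordProd σ w` is the
product `σ(x₁)⋯σ(x_k)` in `K`, with the empty word mapped to `1`. -/
def wordProd {X K : Type} [Monoid K] (σ : X → K) (w : List X) : K :=
  (w.map σ).prod

/-- `IsLangEval E` says that `E` is the family of structurally induced language
interpretations, one for each assignment `σ : X → P(Y*)` of languages to
variables: each `E σ` is a homomorphism for the semiring operations on
languages, with `E σ (μx.t) = ⋃ n, E σ (nx.t)`. -/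
structure IsLangEval {X Y : Type} [DecidableEq X] [Infinite X]
    (E : (X → Language Y) → MuTerm X → Language Y) : Prop where
  var : ∀ (σ : X → Language Y) (x : X), E σ (.var x) = σ x
  zero : ∀ σ, E σ .zero = 0
  one : ∀ σ, E σ .one = 1
  add : ∀ σ s t, E σ (.add s t) = E σ s + E σ t
  mul : ∀ σ s t, E σ (.mul s t) = E σ s * E σ t
  mu : ∀ (σ : X → Language Y) (x : X) (t : MuTerm X),
    E σ (.mu x t) = ⨆ n : ℕ, E σ (MuTerm.napprox n x t)

/-! Bekić's lemma reduces the least solution of a system of two inequalities to two nested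
one-variable least fixed points: for fixed `b`, `A b` is the least prefixed point of `f (·, b)`,
and `b₀` is the least prefixed point of `b ↦ g (A b, b)`. Monotonicity of `f` makes `A` monotone,
which is all that is needed to compare `(A b₀, b₀)` with an arbitrary solution `(a, b)`.
For the μ-calculus, the substitution lemma `σ(t[x := u]) = σ[x ↦ σ(u)](t)` identifies `σ(b₀)`
and `σ(a₀)` with these two nested fixed points. -/

theorem isLeast_bekic {α β : Type*} [Preorder α] [Preorder β] {f : α × β → α} {g : α × β → β}
    (hf : Monotone f) (hg : Monotone g) {A : β → α}
    (hA : ∀ b, IsLeast {a | f (a, b) ≤ a} (A b)) {b₀ : β}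
    (hb₀ : IsLeast {b | g (A b, b) ≤ b} b₀) :
    IsLeast {ab : α × β | f ab ≤ ab.1 ∧ g ab ≤ ab.2} (A b₀, b₀) := by
  refine ⟨⟨(hA b₀).1, hb₀.1⟩, ?_⟩
  rintro ⟨a, b⟩ ⟨hfa, hgb⟩
  have hAa : A b ≤ a := (hA b).2 hfa
  have hb₀b : b₀ ≤ b := hb₀.2 <| (hg (Prod.mk_le_mk.2 ⟨hAa, le_rfl⟩)).trans hgb
  have hAb : A b₀ ≤ A b := (hA b₀).2 <| (hf (Prod.mk_le_mk.2 ⟨le_rfl, hb₀b⟩)).trans (hA b).1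
  exact ⟨hAb.trans hAa, hb₀b⟩

namespace MuTerm

variable {X : Type} [DecidableEq X]

theorem fv_subset_vars : ∀ t : MuTerm X, t.fv ⊆ t.vars
  | var _ | zero | one => subset_rfl
  | add s t | mul s t => Finset.union_subset_union (fv_subset_vars s) (fv_subset_vars t)
  | mu x t => Finset.sdiff_subset.trans ((fv_subset_vars t).trans (Finset.subset_insert x _))

end MuTerm

namespace IsInterp

open MuTerm Function

variable {X C : Type} [DecidableEq X] [Infinite X] [ChomskyAlgebra C]
  {eval : (X → C) → MuTerm X → C}

theorem eval_mu_eq (h : IsInterp eval) {v w : X → C} {x x' : X} {t t' : MuTerm X}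
    (H : ∀ a, eval (update v x a) t = eval (update w x' a) t') :
    eval v (.mu x t) = eval w (.mu x' t') :=
  (h.mu v x t).unique (by simpa only [H] using h.mu w x' t')

theorem eval_congr (h : IsInterp eval) :
    ∀ (t : MuTerm X) {v w : X → C}, (∀ z ∈ t.fv, v z = w z) → eval v t = eval w t
  | .var z, v, w, hvw => by rw [h.var, h.var, hvw z (Finset.mem_singleton_self z)]
  | .zero, v, w, _ => by rw [h.zero, h.zero]
  | .one, v, w, _ => by rw [h.one, h.one]
  | .add s t, v, w, hvw => by
      rw [h.add, h.add, eval_congr h s fun z hz => hvw z (Finset.mem_union_left _ hz),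
        eval_congr h t fun z hz => hvw z (Finset.mem_union_right _ hz)]
  | .mul s t, v, w, hvw => by
      rw [h.mul, h.mul, eval_congr h s fun z hz => hvw z (Finset.mem_union_left _ hz),
        eval_congr h t fun z hz => hvw z (Finset.mem_union_right _ hz)]
  | .mu x t, v, w, hvw => h.eval_mu_eq fun a => eval_congr h t fun z hz => by
      by_cases hzx : z = x
      · simp only [hzx, update_self]
      · simpa only [update_of_ne hzx] using hvw z (Finset.mem_sdiff.2 ⟨hz, by simpa⟩)

theorem eval_update_of_notMem_fv (h : IsInterp eval) {t : MuTerm X} {z : X} (hz : z ∉ t.fv)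
    (v : X → C) (a : C) : eval (update v z a) t = eval v t :=
  h.eval_congr t fun _ hw => update_of_ne (ne_of_mem_of_not_mem hw hz) _ _

theorem eval_mono (h : IsInterp eval) : ∀ t : MuTerm X, Monotone fun v => eval v t
  | .var z, v, w, hvw => by simpa only [h.var] using hvw z
  | .zero, v, w, _ => by simp only [h.zero, le_rfl]
  | .one, v, w, _ => by simp only [h.one, le_rfl]
  | .add s t, v, w, hvw => by
      simpa only [h.add] using add_le_add (eval_mono h s hvw) (eval_mono h t hvw)
  | .mul s t, v, w, hvw => by
      simpa only [h.mul] using mul_le_mul' (eval_mono h s hvw) (eval_mono h t hvw)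
  | .mu x t, v, w, hvw => (h.mu v x t).2 <|
      (eval_mono h t (update_le_update_iff.2 ⟨le_rfl, fun j _ => hvw j⟩)).trans (h.mu w x t).1

theorem eval_rename (h : IsInterp eval) :
    ∀ (t : MuTerm X) {y z : X}, z ∉ t.vars → ∀ (v : X → C) (a : C),
      eval (update v z a) (rename y z t) = eval (update v y a) t
  | .var w, y, z, hz, v, a => by
      have hwz : w ≠ z := fun hwz => hz (by simp [vars, hwz])
      by_cases hwy : w = y
      · simp [rename, hwy, h.var]
      · simp [rename, hwy, hwz, h.var]
  | .zero, y, z, _, v, a => by rw [rename, h.zero, h.zero]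
  | .one, y, z, _, v, a => by rw [rename, h.one, h.one]
  | .add s t, y, z, hz, v, a => by
      simp only [vars, Finset.mem_union, not_or] at hz
      rw [rename, h.add, h.add, eval_rename h s hz.1, eval_rename h t hz.2]
  | .mul s t, y, z, hz, v, a => by
      simp only [vars, Finset.mem_union, not_or] at hz
      rw [rename, h.mul, h.mul, eval_rename h s hz.1, eval_rename h t hz.2]
  | .mu x t, y, z, hz, v, a => by
      simp only [vars, Finset.mem_insert, not_or] at hz
      obtain ⟨hzx, hzt⟩ := hz
      by_cases hxy : x = y
      · rw [rename, if_pos hxy, h.eval_update_of_notMem_fv, h.eval_update_of_notMem_fv]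
        · simp [fv, hxy]
        · exact fun hzt' => hzt (fv_subset_vars _ (Finset.mem_sdiff.1 hzt').1)
      · rw [rename, if_neg hxy]
        refine h.eval_mu_eq fun c => ?_
        rw [update_comm hzx, eval_rename h t hzt, update_comm (Ne.symm hxy)]

theorem eval_subst (h : IsInterp eval) (x : X) (u : MuTerm X) (t : MuTerm X) (v : X → C) :
    eval v (subst x u t) = eval (update v x (eval v u)) t := by
  match t with
  | .var w =>
      by_cases hwx : w = x
      · simp [subst, hwx, h.var]
      · simp [subst, hwx, h.var]
  | .zero => rw [subst, h.zero, h.zero]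
  | .one => rw [subst, h.one, h.one]
  | .add s t => rw [subst, h.add, h.add, eval_subst h x u s, eval_subst h x u t]
  | .mul s t => rw [subst, h.mul, h.mul, eval_subst h x u s, eval_subst h x u t]
  | .mu w t =>
      by_cases hwx : w = x
      · rw [subst, if_pos hwx, h.eval_update_of_notMem_fv (by simp [fv, hwx])]
      · rw [subst, if_neg hwx]
        have hfresh := Classical.choose_spec (Infinite.exists_notMem_finset (vars t ∪ fv u ∪ {x}))
        generalize Classical.choose _ = z at hfresh ⊢
        simp only [Finset.mem_union, Finset.mem_singleton, not_or] at hfresh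
        obtain ⟨⟨hzt, hzu⟩, hzx⟩ := hfresh
        refine h.eval_mu_eq fun a => ?_
        rw [eval_subst h x u, h.eval_update_of_notMem_fv hzu, update_comm hzx,
          h.eval_rename t hzt]
termination_by t.size
decreasing_by all_goals (simp only [size, size_rename]; omega)

end IsInterp

open MuTerm Function in
/-- Bekić, 2×2 case: with `b₀ = μy.(q[x := μx.p])` and
`a₀ = (μx.p)[y := b₀]`, the pair `(σ(a₀), σ(b₀))` is the least pair `(a, b)`
with `σ[x↦a][y↦b](p) ≤ a` and `σ[x↦a][y↦b](q) ≤ b`. -/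
theorem statement15 {X C : Type} [DecidableEq X] [Infinite X] [ChomskyAlgebra C]
    (eval : (X → C) → MuTerm X → C) (h : IsInterp eval) (v : X → C)
    (x y : X) (hxy : x ≠ y) (p q : MuTerm X) :
    IsLeast {ab : C × C |
        eval (Function.update (Function.update v x ab.1) y ab.2) p ≤ ab.1 ∧
        eval (Function.update (Function.update v x ab.1) y ab.2) q ≤ ab.2}
      (eval v (MuTerm.subst y (.mu y (MuTerm.subst x (.mu x p) q)) (.mu x p)),
       eval v (.mu y (MuTerm.subst x (.mu x p) q))) := by
  have hupdate : Monotone fun ab : C × C => update (update v x ab.1) y ab.2 :=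
    fun _ _ hab => update_le_update_iff.2 ⟨hab.2, fun _ _ => update_mono (f := v) (i := x) hab.1 _⟩
  have hcomm (a b : C) : update (update v y b) x a = update (update v x a) y b :=
    update_comm hxy.symm b a v
  rw [h.eval_subst]
  refine isLeast_bekic ((h.eval_mono p).comp hupdate) ((h.eval_mono q).comp hupdate)
    (A := fun b => eval (update v y b) (.mu x p)) (fun b => ?_) ?_
  · simpa only [hcomm, comp_apply] using h.mu (update v y b) x p
  · simpa only [h.eval_subst, hcomm, comp_apply] using h.mu v y (subst x (.mu x p) q)
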